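/- Let U = [U_k U_c] ∈ ℝ^{m×m} and V = [V_k V_c] ∈ ℝ^{n×n} be orthogonal matrices, where U_k ∈ ℝ^{m×k} and V_k ∈ ℝ^{n×k}. Let D ∈ ℝ^{k×k} be any matrix and let M ∈ ℝ^{m×n} be any matrix, and set Θ₁ = U_k·D·V_kᵀ and M₂ = U_c·U_cᵀ·M·V_c·V_cᵀ. Then ‖Θ₁ + M₂‖_* = ‖Θ₁‖_* + ‖M₂‖_*. -/

import Mathlib

open Matrix

/-- The positive semidefinite square root `Matrix.PosSemidef.sqrt` of the older Mathlib
(removed since), spelled out with its old definition. -/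
noncomputable def Matrix.PosSemidef.sqrt {r : ℕ} {S : Matrix (Fin r) (Fin r) ℝ}
    (hS : S.PosSemidef) : Matrix (Fin r) (Fin r) ℝ :=
  hS.1.eigenvectorUnitary.1 * diagonal ((↑) ∘ (√·) ∘ hS.1.eigenvalues) *
    (star hS.1.eigenvectorUnitary : Matrix (Fin r) (Fin r) ℝ)

/-- Frobenius norm of a real matrix: `(tr(MᵀM))^{1/2}`. -/
noncomputable def frobNorm {m n : ℕ} (M : Matrix (Fin m) (Fin n) ℝ) : ℝ :=
  Real.sqrt ((Mᵀ * M).trace)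

/-- Nuclear norm of a real matrix: the trace of the positive semidefinite
square root of `MᵀM` (= sum of singular values). -/
noncomputable def nuclearNorm {m n : ℕ} (M : Matrix (Fin m) (Fin n) ℝ) : ℝ :=
  (Matrix.posSemidef_conjTranspose_mul_self M).sqrt.trace

/-- Spectral (ℓ2 → ℓ2 operator) norm of a real matrix: its largest singular value. -/
noncomputable def opNorm {m n : ℕ} (M : Matrix (Fin m) (Fin n) ℝ) : ℝ :=
  ‖LinearMap.toContinuousLinearMap (Matrix.toEuclideanLin M)‖

/-- The ℓ1 norm of the vectorization of a matrix. -/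
noncomputable def vecL1 {m n : ℕ} (M : Matrix (Fin m) (Fin n) ℝ) : ℝ :=
  ∑ i, ∑ j, |M i j|

/-- The ℓ∞ norm of the vectorization of a matrix. -/
noncomputable def vecLinf {m n : ℕ} (M : Matrix (Fin m) (Fin n) ℝ) : ℝ :=
  ⨆ i, ⨆ j, |M i j|

/-- Frobenius (trace) inner product of two matrices. -/
noncomputable def traceInner {m n : ℕ} (M N : Matrix (Fin m) (Fin n) ℝ) : ℝ :=
  (Mᵀ * N).trace

open scoped Classical in
/-- The inverse of the positive semidefinite square root of a positive semidefinite
matrix (junk value `0` if the matrix is not positive semidefinite). -/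
noncomputable def matInvSqrt {r : ℕ} (S : Matrix (Fin r) (Fin r) ℝ) :
    Matrix (Fin r) (Fin r) ℝ :=
  if h : S.PosSemidef then h.sqrt⁻¹ else 0

/-! Since `U_kᵀU_c = 0` and `V_kᵀV_c = 0`, we have `Θ₁ᵀ M₂ = 0` and `Θ₁ M₂ᵀ = 0`, so
`(Θ₁ + M₂)ᵀ(Θ₁ + M₂)` splits as `Θ₁ᵀΘ₁ + M₂ᵀM₂`, a sum of positive semidefinite matrices with
vanishing product. Such matrices have square roots with vanishing product as well, so the square
root of the sum is the sum of the square roots, and taking traces gives additivity of the nuclear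
norm. -/

open scoped MatrixOrder ComplexOrder

lemma IsSelfAdjoint.mul_eq_zero_comm {R : Type*} [NonUnitalNonAssocSemiring R] [StarRing R]
    {x y : R} (hx : IsSelfAdjoint x) (hy : IsSelfAdjoint y) (h : x * y = 0) : y * x = 0 := by
  rw [← hx.star_eq, ← hy.star_eq, ← star_mul, h, star_zero]

namespace Matrix

section CFCSqrt

variable {n 𝕜 : Type*} [Fintype n] [DecidableEq n] [RCLike 𝕜]

-- `(√P Q)ᴴ (√P Q) = Q P Q = 0`.
lemma cfcSqrt_mul_eq_zero_of_mul_eq_zero {P Q : Matrix n n 𝕜} (hP : 0 ≤ P)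
    (hQ : IsSelfAdjoint Q) (hPQ : P * Q = 0) : CFC.sqrt P * Q = 0 := by
  rw [← conjTranspose_mul_self_eq_zero, conjTranspose_mul, ← star_eq_conjTranspose,
    ← star_eq_conjTranspose, (CFC.sqrt_nonneg P).isSelfAdjoint.star_eq, hQ.star_eq]
  calc Q * CFC.sqrt P * (CFC.sqrt P * Q) = Q * (CFC.sqrt P * CFC.sqrt P * Q) := by
        simp only [Matrix.mul_assoc]
    _ = 0 := by rw [CFC.sqrt_mul_sqrt_self P hP, hPQ, Matrix.mul_zero]

lemma cfcSqrt_mul_cfcSqrt_eq_zero {P Q : Matrix n n 𝕜} (hP : 0 ≤ P) (hQ : 0 ≤ Q)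
    (hPQ : P * Q = 0) : CFC.sqrt P * CFC.sqrt Q = 0 := by
  have hS := (CFC.sqrt_nonneg P).isSelfAdjoint
  have hT := (CFC.sqrt_nonneg Q).isSelfAdjoint
  have hSQ : CFC.sqrt P * Q = 0 := cfcSqrt_mul_eq_zero_of_mul_eq_zero hP hQ.isSelfAdjoint hPQ
  have hTS : CFC.sqrt Q * CFC.sqrt P = 0 :=
    cfcSqrt_mul_eq_zero_of_mul_eq_zero hQ hS (hS.mul_eq_zero_comm hQ.isSelfAdjoint hSQ)
  exact hT.mul_eq_zero_comm hS hTS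

lemma cfcSqrt_add_of_mul_eq_zero {P Q : Matrix n n 𝕜} (hP : 0 ≤ P) (hQ : 0 ≤ Q)
    (hPQ : P * Q = 0) : CFC.sqrt (P + Q) = CFC.sqrt P + CFC.sqrt Q := by
  have hST := cfcSqrt_mul_cfcSqrt_eq_zero hP hQ hPQ
  have hTS := (CFC.sqrt_nonneg P).isSelfAdjoint.mul_eq_zero_comm
    (CFC.sqrt_nonneg Q).isSelfAdjoint hST
  refine CFC.sqrt_unique ?_ (add_nonneg (CFC.sqrt_nonneg P) (CFC.sqrt_nonneg Q))
  rw [Matrix.add_mul, Matrix.mul_add, Matrix.mul_add, hST, hTS, CFC.sqrt_mul_sqrt_self P hP,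
    CFC.sqrt_mul_sqrt_self Q hQ, add_zero, zero_add]

end CFCSqrt

lemma PosSemidef.sqrt_eq_cfcSqrt {r : ℕ} {S : Matrix (Fin r) (Fin r) ℝ} (hS : S.PosSemidef) :
    hS.sqrt = CFC.sqrt S := by
  rw [CFC.sqrt_eq_real_sqrt S hS.nonneg, cfcₙ_eq_cfc, hS.1.cfc_eq]
  simp only [PosSemidef.sqrt, IsHermitian.cfc, RCLike.ofReal_real_eq_id, CompTriple.comp_eq,
    Unitary.conjStarAlgAut_apply]
  rfl

end Matrix

lemma nuclearNorm_eq_trace_cfcSqrt {m n : ℕ} (M : Matrix (Fin m) (Fin n) ℝ) :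
    nuclearNorm M = (CFC.sqrt (Mᵀ * M)).trace := by
  rw [nuclearNorm, PosSemidef.sqrt_eq_cfcSqrt, conjTranspose_eq_transpose_of_trivial]

lemma nuclearNorm_add_of_transpose_mul_eq_zero {m n : ℕ} {A B : Matrix (Fin m) (Fin n) ℝ}
    (hAB : Aᵀ * B = 0) (hABt : A * Bᵀ = 0) :
    nuclearNorm (A + B) = nuclearNorm A + nuclearNorm B := by
  have hBA : Bᵀ * A = 0 := by
    rw [← transpose_transpose (Bᵀ * A), transpose_mul, transpose_transpose, hAB, transpose_zero]
  have hGram : (A + B)ᵀ * (A + B) = Aᵀ * A + Bᵀ * B := by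
    rw [transpose_add, Matrix.add_mul, Matrix.mul_add, Matrix.mul_add, hAB, hBA, add_zero,
      zero_add]
  have hOrth : (Aᵀ * A) * (Bᵀ * B) = 0 := by
    rw [Matrix.mul_assoc, ← Matrix.mul_assoc A, hABt, Matrix.zero_mul, Matrix.mul_zero]
  have hGram_nonneg (X : Matrix (Fin m) (Fin n) ℝ) : 0 ≤ Xᵀ * X := by
    simpa using (posSemidef_conjTranspose_mul_self X).nonneg
  rw [nuclearNorm_eq_trace_cfcSqrt, nuclearNorm_eq_trace_cfcSqrt, nuclearNorm_eq_trace_cfcSqrt,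
    hGram, cfcSqrt_add_of_mul_eq_zero (hGram_nonneg A) (hGram_nonneg B) hOrth, trace_add]

theorem stmt_3_general
    (m n k : ℕ)
    (Uk : Matrix (Fin m) (Fin k) ℝ) (Uc : Matrix (Fin m) (Fin (m - k)) ℝ)
    (Vk : Matrix (Fin n) (Fin k) ℝ) (Vc : Matrix (Fin n) (Fin (n - k)) ℝ)
    (hUkc : Ukᵀ * Uc = 0)
    (hVkc : Vkᵀ * Vc = 0)
    (D : Matrix (Fin k) (Fin k) ℝ) (M : Matrix (Fin m) (Fin n) ℝ) :
    nuclearNorm (Uk * D * Vkᵀ + Uc * Ucᵀ * M * Vc * Vcᵀ)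
      = nuclearNorm (Uk * D * Vkᵀ) + nuclearNorm (Uc * Ucᵀ * M * Vc * Vcᵀ) := by
  apply nuclearNorm_add_of_transpose_mul_eq_zero
  · simp only [transpose_mul, transpose_transpose, Matrix.mul_assoc]
    rw [← Matrix.mul_assoc Ukᵀ Uc, hUkc, Matrix.zero_mul, Matrix.mul_zero, Matrix.mul_zero]
  · simp only [transpose_mul, transpose_transpose, Matrix.mul_assoc]
    rw [← Matrix.mul_assoc Vkᵀ Vc, hVkc, Matrix.zero_mul, Matrix.mul_zero, Matrix.mul_zero]

/-- Lemma A2: additivity of the nuclear norm across the block decomposition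
induced by the singular value decomposition of a rank-k matrix. -/
theorem stmt_3
    (m n k : ℕ)
    (Uk : Matrix (Fin m) (Fin k) ℝ) (Uc : Matrix (Fin m) (Fin (m - k)) ℝ)
    (Vk : Matrix (Fin n) (Fin k) ℝ) (Vc : Matrix (Fin n) (Fin (n - k)) ℝ)
    (hUk : Ukᵀ * Uk = 1) (hUc : Ucᵀ * Uc = 1) (hUkc : Ukᵀ * Uc = 0)
    (hUfull : Uk * Ukᵀ + Uc * Ucᵀ = 1)
    (hVk : Vkᵀ * Vk = 1) (hVc : Vcᵀ * Vc = 1) (hVkc : Vkᵀ * Vc = 0)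
    (hVfull : Vk * Vkᵀ + Vc * Vcᵀ = 1)
    (D : Matrix (Fin k) (Fin k) ℝ) (M : Matrix (Fin m) (Fin n) ℝ) :
    nuclearNorm (Uk * D * Vkᵀ + Uc * Ucᵀ * M * Vc * Vcᵀ)
      = nuclearNorm (Uk * D * Vkᵀ) + nuclearNorm (Uc * Ucᵀ * M * Vc * Vcᵀ) :=
  stmt_3_general m n k Uk Uc Vk Vc hUkc hVkc D M
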